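/- Suppose 𝒴 = {0, 1} and 𝒟 = 𝒵 = {0, 1, 2} (treatments ordered as real numbers), the latent distribution Q satisfies instrument exogeneity and ordered monotonicity (Q{D_j ≥ D_k} = 1 whenever j ≥ k in 𝒵), Q rationalizes P (P = Q∘T^{-1}), and P{Z = z} > 0 for all z. Then Q{Y_1 = 1} ≥ p_{11|0} − p_{11|1} + p_{11|2} and Q{Y_1 = 1} ≤ 1 − p_{01|0} + p_{01|1} − p_{01|2}, where p_{yd|z} := P{Y = y, D = d | Z = z}. -/
import Mathlib


open Finset

/-- A probability mass function on a finite type. -/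
structure ProbMass (α : Type) [Fintype α] where
  mass : α → ℝ
  nonneg : ∀ a, 0 ≤ mass a
  total : ∑ a, mass a = 1

/-- Probability of an event under a probability mass function. -/
noncomputable def pr {α : Type} [Fintype α] (Q : ProbMass α) (A : Set α) : ℝ :=
  ∑ a, A.indicator Q.mass a

/-- Expectation of a real-valued function under a probability mass function. -/
noncomputable def expect {α : Type} [Fintype α] (Q : ProbMass α) (f : α → ℝ) : ℝ :=
  ∑ a, Q.mass a * f a

/-- The latent space: potential outcomes `(Y_d)_{d ∈ D}` taking values in the finite set
`𝒴 ⊂ ℝ`, potential treatments `(D_z)_{z ∈ Z}`, and the instrument `Z`. -/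
abbrev Latent (𝒴 : Finset ℝ) (D Z : Type) : Type := (D → ↥𝒴) × (Z → D) × Z

/-- The observed space: `(Y, D, Z)`. -/
abbrev Obs (𝒴 : Finset ℝ) (D Z : Type) : Type := ↥𝒴 × D × Z

variable {𝒴 : Finset ℝ} {D Z : Type} [Fintype D] [DecidableEq D] [Fintype Z] [DecidableEq Z]

/-- The map `T` sending `((y_d), (d_z), z)` to `(y_{d_z}, d_z, z)`. -/
def Tmap (ω : Latent 𝒴 D Z) : Obs 𝒴 D Z := (ω.1 (ω.2.1 ω.2.2), ω.2.1 ω.2.2, ω.2.2)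

/-- `Q` rationalizes `P`: `P = Q ∘ T⁻¹`. -/
def Rationalizes (Q : ProbMass (Latent 𝒴 D Z)) (P : ProbMass (Obs 𝒴 D Z)) : Prop :=
  ∀ o : Obs 𝒴 D Z, P.mass o = pr Q {ω | Tmap ω = o}

/-- Instrument exogeneity: `((Y_d), (D_z))` is independent of `Z` under `Q`. -/
def Exog (Q : ProbMass (Latent 𝒴 D Z)) : Prop :=
  ∀ (yd : D → ↥𝒴) (dz : Z → D) (z : Z),
    pr Q {ω | ω.1 = yd ∧ ω.2.1 = dz ∧ ω.2.2 = z}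
      = pr Q {ω | ω.1 = yd ∧ ω.2.1 = dz} * pr Q {ω | ω.2.2 = z}

/-- `zs` maximally encourages treatment `d` under `Q`:
`Q{D_{zs} ≠ d and D_{z'} = d for some z'} = 0`. -/
def MaxEnc (Q : ProbMass (Latent 𝒴 D Z)) (d : D) (zs : Z) : Prop :=
  pr Q {ω | ω.2.1 zs ≠ d ∧ ∃ z' : Z, ω.2.1 z' = d} = 0

/-- Generalized monotonicity. -/
def GenMono (Q : ProbMass (Latent 𝒴 D Z)) : Prop :=
  ∀ d : D, ∃ zs : Z, MaxEnc Q d zs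

/-- `θ(Q) = (E_Q[Y_d])_{d ∈ D}`, the vector of average potential outcomes. -/
noncomputable def theta (Q : ProbMass (Latent 𝒴 D Z)) : D → ℝ :=
  fun d => expect Q fun ω => (ω.1 d : ℝ)

/-- `𝐐₀(P, 𝐐)`: the set of `Q ∈ 𝐐` that rationalize `P`. -/
def Q0 (P : ProbMass (Obs 𝒴 D Z)) (QQ : Set (ProbMass (Latent 𝒴 D Z))) :
    Set (ProbMass (Latent 𝒴 D Z)) :=
  {Q | Q ∈ QQ ∧ Rationalizes Q P}

/-- `Θ₀(P, 𝐐)`: the identified set for `θ(Q)`. -/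
noncomputable def Theta0 (P : ProbMass (Obs 𝒴 D Z))
    (QQ : Set (ProbMass (Latent 𝒴 D Z))) : Set (D → ℝ) :=
  theta '' Q0 P QQ

/-- Unrestricted potential outcomes: if `Q ∈ 𝐐`, `Q'` is exogenous, and the potential
treatments have the same distribution under `Q'` as under `Q`, then `Q' ∈ 𝐐`. -/
def UnrestrictedPO (QQ : Set (ProbMass (Latent 𝒴 D Z))) : Prop :=
  ∀ Q ∈ QQ, ∀ Q' : ProbMass (Latent 𝒴 D Z), Exog Q' →
    (∀ dz : Z → D, pr Q' {ω | ω.2.1 = dz} = pr Q {ω | ω.2.1 = dz}) → Q' ∈ QQ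

/-- `P{Z = z}`. -/
noncomputable def prZ (P : ProbMass (Obs 𝒴 D Z)) (z : Z) : ℝ :=
  pr P {o | o.2.2 = z}

/-- `P{D = d ∣ Z = z}`. -/
noncomputable def condD (P : ProbMass (Obs 𝒴 D Z)) (d : D) (z : Z) : ℝ :=
  pr P {o | o.2.1 = d ∧ o.2.2 = z} / prZ P z

/-- `p_{yd|z} = P{Y = y, D = d ∣ Z = z}`. -/
noncomputable def pObs (P : ProbMass (Obs 𝒴 D Z)) (y : ℝ) (d : D) (z : Z) : ℝ :=
  pr P {o | (o.1 : ℝ) = y ∧ o.2.1 = d ∧ o.2.2 = z} / prZ P z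

/-- `β_{d|z} = E_P[Y · 1{D = d} ∣ Z = z]`. -/
noncomputable def betaObs (P : ProbMass (Obs 𝒴 D Z)) (d : D) (z : Z) : ℝ :=
  (expect P fun o => if o.2.1 = d ∧ o.2.2 = z then (o.1 : ℝ) else 0) / prZ P z


open Classical in
lemma pr_eq {α : Type} [Fintype α] (Q : ProbMass α) (A : Set α) :
    pr Q A = ∑ a, if a ∈ A then Q.mass a else 0 := by
  simp [pr, Set.indicator_apply]

lemma pr_eq' {α : Type} [Fintype α] (Q : ProbMass α) (p : α → Prop) [DecidablePred p] :
    pr Q {a | p a} = ∑ a, if p a then Q.mass a else 0 := by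
  simp [pr, Set.indicator_apply, Set.mem_setOf_eq]

lemma mass_eq_zero {α : Type} [Fintype α] (Q : ProbMass α) {S : Set α}
    (hS : pr Q S = 1) {a : α} (ha : a ∉ S) : Q.mass a = 0 := by
  classical
  rw [pr_eq] at hS
  have hsum : ∑ b, (Q.mass b - if b ∈ S then Q.mass b else 0) = 0 := by
    rw [Finset.sum_sub_distrib, Q.total, hS]; ring
  have hz := (Finset.sum_eq_zero_iff_of_nonneg (fun b _ => by
      by_cases hb : b ∈ S <;> simp [hb, Q.nonneg b])).mp hsum a (Finset.mem_univ a)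
  simpa [ha] using hz

lemma pr_compl_pair {α : Type} [Fintype α] (Q : ProbMass α) (A B : Set α)
    (h : ∀ a, a ∈ A ↔ a ∉ B) : pr Q A + pr Q B = 1 := by
  classical
  rw [pr_eq, pr_eq, ← Finset.sum_add_distrib, ← Q.total]
  apply Finset.sum_congr rfl
  intro a _
  by_cases hb : a ∈ B
  · have : a ∉ A := fun hA => (h a).mp hA hb
    simp [hb, this]
  · simp [hb, (h a).mpr hb]

lemma pr_four {α : Type} [Fintype α] (Q : ProbMass α) (A B C E : Set α)
    (hAE : ∀ a, Q.mass a ≠ 0 → a ∈ A → a ∈ E)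
    (hCE : ∀ a, Q.mass a ≠ 0 → a ∈ C → a ∈ E)
    (hB : ∀ a, Q.mass a ≠ 0 → a ∈ A → a ∈ C → a ∈ B) :
    pr Q A + pr Q C ≤ pr Q B + pr Q E := by
  classical
  rw [pr_eq, pr_eq, pr_eq, pr_eq, ← Finset.sum_add_distrib, ← Finset.sum_add_distrib]
  apply Finset.sum_le_sum
  intro a _
  by_cases hm : Q.mass a = 0
  · simp [hm]
  · have h0 := Q.nonneg a
    by_cases hA : a ∈ A <;> by_cases hC : a ∈ C
    · simp [hA, hC, hB a hm hA hC, hAE a hm hA]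
    · have := hAE a hm hA
      simp only [hA, hC, this, if_true, if_false, add_zero]
      have : (0:ℝ) ≤ if a ∈ B then Q.mass a else 0 := by positivity
      linarith
    · have := hCE a hm hC
      simp only [hA, hC, this, if_true, if_false, zero_add]
      have : (0:ℝ) ≤ if a ∈ B then Q.mass a else 0 := by positivity
      linarith
    · have h1 : (0:ℝ) ≤ if a ∈ B then Q.mass a else 0 := by positivity
      have h2 : (0:ℝ) ≤ if a ∈ E then Q.mass a else 0 := by positivity
      simp only [hA, hC, if_false]
      linarith

lemma pr_push {Q : ProbMass (Latent 𝒴 D Z)} {P : ProbMass (Obs 𝒴 D Z)}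
    (hR : Rationalizes Q P) (A : Set (Obs 𝒴 D Z)) :
    pr P A = pr Q {ω | Tmap ω ∈ A} := by
  classical
  rw [pr_eq, pr_eq' Q (fun ω => Tmap ω ∈ A)]
  have step : ∀ o : Obs 𝒴 D Z, (if o ∈ A then P.mass o else 0)
      = ∑ ω : Latent 𝒴 D Z, if Tmap ω = o then (if o ∈ A then Q.mass ω else 0) else 0 := by
    intro o
    by_cases ho : o ∈ A
    · simp only [ho, if_true, hR o, pr_eq' Q (fun ω => Tmap ω = o)]
    · simp [ho]
  rw [Finset.sum_congr rfl fun o _ => step o, Finset.sum_comm]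
  apply Finset.sum_congr rfl
  intro ω _
  rw [Finset.sum_ite_eq Finset.univ (Tmap ω) (fun o => if o ∈ A then Q.mass ω else 0)]
  simp

lemma exog_event {Q : ProbMass (Latent 𝒴 D Z)} (hE : Exog Q)
    (B : (D → ↥𝒴) × (Z → D) → Prop) (z : Z) :
    pr Q {ω | B (ω.1, ω.2.1) ∧ ω.2.2 = z}
      = pr Q {ω | B (ω.1, ω.2.1)} * pr Q {ω | ω.2.2 = z} := by
  classical
  have hsing : ∀ (yd : D → ↥𝒴) (dz : Z → D) (z' : Z),
      pr Q {ω | ω.1 = yd ∧ ω.2.1 = dz ∧ ω.2.2 = z'} = Q.mass (yd, dz, z') := by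
    intro yd dz z'
    rw [pr_eq' Q (fun ω => ω.1 = yd ∧ ω.2.1 = dz ∧ ω.2.2 = z')]
    rw [Finset.sum_congr rfl (fun (a : Latent 𝒴 D Z) _ =>
      if_congr (show (a.1 = yd ∧ a.2.1 = dz ∧ a.2.2 = z') ↔ a = (yd, dz, z') by
        simp [Prod.ext_iff]) rfl rfl)]
    simp
  have hmarg : ∀ (yd : D → ↥𝒴) (dz : Z → D),
      pr Q {ω | ω.1 = yd ∧ ω.2.1 = dz} = ∑ z' : Z, Q.mass (yd, dz, z') := by
    intro yd dz
    rw [pr_eq' Q (fun ω => ω.1 = yd ∧ ω.2.1 = dz)]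
    simp only [Fintype.sum_prod_type]
    have s1 : ∀ (x : D → ↥𝒴) (y : Z → D), (∑ c : Z, if x = yd ∧ y = dz then Q.mass (x,y,c) else 0)
        = if x = yd then (if y = dz then ∑ c : Z, Q.mass (x,y,c) else 0) else 0 := by
      intro x y
      by_cases h1 : x = yd <;> by_cases h2 : y = dz <;> simp [h1, h2]
    rw [Finset.sum_congr rfl fun x _ => Finset.sum_congr rfl fun y _ => s1 x y]
    have s2 : ∀ x : D → ↥𝒴,
        (∑ y : Z → D, if x = yd then (if y = dz then ∑ c : Z, Q.mass (x,y,c) else 0) else 0)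
        = if x = yd then ∑ c : Z, Q.mass (x, dz, c) else 0 := by
      intro x
      by_cases h1 : x = yd
      · subst h1
        simp only [if_true]
        rw [Finset.sum_ite_eq' Finset.univ dz (fun y => ∑ c : Z, Q.mass (x,y,c))]
        simp
      · simp [h1]
    rw [Finset.sum_congr rfl fun x _ => s2 x]
    rw [Finset.sum_ite_eq' Finset.univ yd (fun x => ∑ c : Z, Q.mass (x, dz, c))]
    simp
  have hfact : ∀ (yd : D → ↥𝒴) (dz : Z → D),
      Q.mass (yd, dz, z) = (∑ z' : Z, Q.mass (yd, dz, z')) * pr Q {ω | ω.2.2 = z} := by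
    intro yd dz
    rw [← hsing, ← hmarg, hE]
  rw [pr_eq' Q (fun ω => B (ω.1, ω.2.1) ∧ ω.2.2 = z), pr_eq' Q (fun ω => B (ω.1, ω.2.1))]
  simp only [Fintype.sum_prod_type]
  have L1 : ∀ (x : D → ↥𝒴) (y : Z → D),
      (∑ c : Z, if B (x, y) ∧ c = z then Q.mass (x,y,c) else 0)
      = if B (x, y) then Q.mass (x, y, z) else 0 := by
    intro x y
    by_cases hb : B (x, y)
    · simp only [hb, true_and, if_true]
      rw [Finset.sum_ite_eq' Finset.univ z (fun c => Q.mass (x,y,c))]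
      simp
    · simp [hb]
  have R1 : ∀ (x : D → ↥𝒴) (y : Z → D),
      (∑ c : Z, if B (x, y) then Q.mass (x,y,c) else 0)
      = if B (x, y) then ∑ c : Z, Q.mass (x,y,c) else 0 := by
    intro x y
    by_cases hb : B (x, y) <;> simp [hb]
  rw [Finset.sum_congr rfl fun x _ => Finset.sum_congr rfl fun y _ => L1 x y]
  rw [Finset.sum_congr rfl fun x _ => Finset.sum_congr rfl fun y _ => R1 x y]
  rw [Finset.sum_mul]
  apply Finset.sum_congr rfl
  intro x _
  rw [Finset.sum_mul]
  apply Finset.sum_congr rfl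
  intro y _
  by_cases hb : B (x, y)
  · simp only [hb, if_true]; exact hfact x y
  · simp [hb]

/-- Example 5.2, ordered monotonicity bounds: with `𝒴 = {0,1}` and
`𝒟 = 𝒵 = {0,1,2}` ordered, instrument exogeneity and ordered monotonicity
(`Q{D_j ≥ D_k} = 1` for `j ≥ k`) imply
`p_{11|0} − p_{11|1} + p_{11|2} ≤ Q{Y_1 = 1} ≤ 1 − p_{01|0} + p_{01|1} − p_{01|2}`. -/
theorem ordered_monotonicity_bounds
    (Q : ProbMass (Latent ({0, 1} : Finset ℝ) (Fin 3) (Fin 3)))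
    (P : ProbMass (Obs ({0, 1} : Finset ℝ) (Fin 3) (Fin 3)))
    (hE : Exog Q)
    (hord : ∀ j k : Fin 3, k ≤ j → pr Q {ω | ω.2.1 k ≤ ω.2.1 j} = 1)
    (hR : Rationalizes Q P)
    (hP : ∀ z : Fin 3, 0 < prZ P z) :
    pObs P 1 1 0 - pObs P 1 1 1 + pObs P 1 1 2 ≤ pr Q {ω | (ω.1 1 : ℝ) = 1} ∧
    pr Q {ω | (ω.1 1 : ℝ) = 1} ≤ 1 - pObs P 0 1 0 + pObs P 0 1 1 - pObs P 0 1 2 := by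
  classical
  -- marginal of Z
  have hprZ : ∀ z : Fin 3, prZ P z = pr Q {ω : Latent ({0, 1} : Finset ℝ) (Fin 3) (Fin 3) | ω.2.2 = z} := by
    intro z
    rw [prZ, pr_push hR]
    rfl
  have hqz : ∀ z : Fin 3, pr Q {ω : Latent ({0, 1} : Finset ℝ) (Fin 3) (Fin 3) | ω.2.2 = z} ≠ 0 := by
    intro z
    rw [← hprZ]
    exact ne_of_gt (hP z)
  -- identify pObs with latent probabilities
  have hpObs : ∀ (y : ℝ) (d z : Fin 3), pObs P y d z
      = pr Q {ω : Latent ({0, 1} : Finset ℝ) (Fin 3) (Fin 3) | (ω.1 d : ℝ) = y ∧ ω.2.1 z = d} := by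
    intro y d z
    have hset : {ω : Latent ({0, 1} : Finset ℝ) (Fin 3) (Fin 3) |
          Tmap ω ∈ {o : Obs ({0, 1} : Finset ℝ) (Fin 3) (Fin 3) | (o.1 : ℝ) = y ∧ o.2.1 = d ∧ o.2.2 = z}}
        = {ω : Latent ({0, 1} : Finset ℝ) (Fin 3) (Fin 3) | ((ω.1 d : ℝ) = y ∧ ω.2.1 z = d) ∧ ω.2.2 = z} := by
      ext ω
      simp only [Set.mem_setOf_eq, Tmap]
      constructor
      · rintro ⟨hy, hd, hz⟩
        subst hz
        rw [hd] at hy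
        exact ⟨⟨hy, hd⟩, rfl⟩
      · rintro ⟨⟨hy, hd⟩, hz⟩
        subst hz
        refine ⟨?_, hd, rfl⟩
        rw [hd]
        exact hy
    have hnum : pr P {o : Obs ({0, 1} : Finset ℝ) (Fin 3) (Fin 3) | (o.1 : ℝ) = y ∧ o.2.1 = d ∧ o.2.2 = z}
        = pr Q {ω : Latent ({0, 1} : Finset ℝ) (Fin 3) (Fin 3) | (ω.1 d : ℝ) = y ∧ ω.2.1 z = d}
          * pr Q {ω : Latent ({0, 1} : Finset ℝ) (Fin 3) (Fin 3) | ω.2.2 = z} := by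
      rw [pr_push hR, hset]
      exact exog_event hE (fun p => (p.1 d : ℝ) = y ∧ p.2 z = d) z
    rw [pObs, hnum, hprZ, mul_div_assoc, div_self (hqz z), mul_one]
  -- monotonicity on the support
  have hm01 : ∀ ω : Latent ({0, 1} : Finset ℝ) (Fin 3) (Fin 3), Q.mass ω ≠ 0 → ω.2.1 0 ≤ ω.2.1 1 := by
    intro ω h
    by_contra hc
    exact h (mass_eq_zero Q (hord 1 0 (by decide)) hc)
  have hm12 : ∀ ω : Latent ({0, 1} : Finset ℝ) (Fin 3) (Fin 3), Q.mass ω ≠ 0 → ω.2.1 1 ≤ ω.2.1 2 := by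
    intro ω h
    by_contra hc
    exact h (mass_eq_zero Q (hord 2 1 (by decide)) hc)
  -- generic bound for each outcome value y
  have key : ∀ y : ℝ,
      pr Q {ω : Latent ({0, 1} : Finset ℝ) (Fin 3) (Fin 3) | (ω.1 1 : ℝ) = y ∧ ω.2.1 0 = 1}
        + pr Q {ω : Latent ({0, 1} : Finset ℝ) (Fin 3) (Fin 3) | (ω.1 1 : ℝ) = y ∧ ω.2.1 2 = 1}
      ≤ pr Q {ω : Latent ({0, 1} : Finset ℝ) (Fin 3) (Fin 3) | (ω.1 1 : ℝ) = y ∧ ω.2.1 1 = 1}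
        + pr Q {ω : Latent ({0, 1} : Finset ℝ) (Fin 3) (Fin 3) | (ω.1 1 : ℝ) = y} := by
    intro y
    apply pr_four
    · exact fun a _ h => h.1
    · exact fun a _ h => h.1
    · intro a hm hA hC
      refine ⟨hA.1, le_antisymm ?_ ?_⟩
      · have := hm12 a hm
        rw [hC.2] at this
        exact this
      · have := hm01 a hm
        rw [hA.2] at this
        exact this
  -- complement identity for Y_1
  have hcompl : pr Q {ω : Latent ({0, 1} : Finset ℝ) (Fin 3) (Fin 3) | (ω.1 1 : ℝ) = 1}
      + pr Q {ω : Latent ({0, 1} : Finset ℝ) (Fin 3) (Fin 3) | (ω.1 1 : ℝ) = 0} = 1 := by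
    apply pr_compl_pair
    intro a
    have hmem := (a.1 1).2
    simp only [Finset.mem_insert, Finset.mem_singleton] at hmem
    simp only [Set.mem_setOf_eq]
    constructor
    · intro h1 h0
      rw [h1] at h0
      norm_num at h0
    · intro h0
      rcases hmem with h | h
      · exact absurd h h0
      · exact h
  constructor
  · have := key 1
    rw [hpObs 1 1 0, hpObs 1 1 1, hpObs 1 1 2]
    linarith
  · have := key 0
    rw [hpObs 0 1 0, hpObs 0 1 1, hpObs 0 1 2]
    linarith
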